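/- Let Γ be a connected bipartite k-regular graph on n vertices with adjacency spectrum {[±k]¹, [±θ]^a, [0]^b} (a, b ≥ 1), and write A = [[0,N],[Nᵀ,0]]. Then NNᵀN = θ²N + (2k/n)(k² − θ²)·J, where J is the all-ones matrix of size n/2. -/

import Mathlib

/-!
Put `f x = x³ - θ² x` and `M = f(A) = A³ - θ² A`. As `f` vanishes at `±θ` and `0`, the spectrum
gives `tr M² = f(k)² + f(-k)²`. The all-ones vector `𝟙` and the signed vector `s = (1; -1)` are
orthogonal eigenvectors of `M` for `f(k)` and `f(-k)`, so the rank-two matrix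
`P = f(k) 𝟙𝟙ᵀ / n + f(-k) ssᵀ / n` satisfies `tr MP = tr P² = tr M²`. Hence `tr (M - P)² = 0`,
i.e. `M = P`, and the `(1,2)` block of `M` is `NNᵀN - θ² N`.
-/

open Matrix

namespace Matrix

variable {ι : Type*} [Fintype ι]

lemma IsHermitian.trace_cfc {𝕜 : Type*} [RCLike 𝕜] [DecidableEq ι] {A : Matrix ι ι 𝕜}
    (hA : A.IsHermitian) (f : ℝ → ℝ) :
    (cfc f A).trace = ∑ i, (f (hA.eigenvalues i) : 𝕜) := by
  rw [hA.cfc_eq, IsHermitian.cfc, Unitary.conjStarAlgAut_apply, trace_mul_cycle,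
    Unitary.coe_star_mul_self, one_mul, trace_diagonal]
  rfl

lemma IsHermitian.trace_cfc_eq_sum_map_eigenvalues {𝕜 : Type*} [RCLike 𝕜] [DecidableEq ι]
    {A : Matrix ι ι 𝕜} (hA : A.IsHermitian) (f : ℝ → ℝ) :
    (cfc f A).trace = ((Finset.univ.val.map hA.eigenvalues).map fun x => (f x : 𝕜)).sum := by
  rw [hA.trace_cfc, Multiset.map_map, Finset.sum_eq_multiset_sum]
  rfl

lemma IsHermitian.trace_mul_self_cube_sub_smul_eq [DecidableEq ι] {A : Matrix ι ι ℝ}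
    (hA : A.IsHermitian) {k θ : ℝ} {a b : ℕ}
    (hspec : Finset.univ.val.map hA.eigenvalues =
      k ::ₘ -k ::ₘ (Multiset.replicate a θ + Multiset.replicate a (-θ) + Multiset.replicate b 0)) :
    ((A ^ 3 - θ ^ 2 • A) * (A ^ 3 - θ ^ 2 • A)).trace
      = (k ^ 3 - θ ^ 2 * k) ^ 2 + ((-k) ^ 3 - θ ^ 2 * (-k)) ^ 2 := by
  have hcfc : cfc (fun x => x ^ 3 - θ ^ 2 * x) A = A ^ 3 - θ ^ 2 • A := by
    rw [cfc_sub _ _ A, cfc_pow_id A 3 hA.isSelfAdjoint, cfc_const_mul_id _ A hA.isSelfAdjoint]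
  rw [← hcfc, ← cfc_mul _ _ A, hA.trace_cfc_eq_sum_map_eigenvalues, hspec]
  simp only [Multiset.map_cons, Multiset.map_add, Multiset.map_replicate, Multiset.sum_cons,
    Multiset.sum_add, Multiset.sum_replicate, nsmul_eq_mul, Real.ringHom_apply]
  ring

lemma pow_mulVec_of_mulVec_eq_smul [DecidableEq ι] {R : Type*} [CommSemiring R]
    {A : Matrix ι ι R} {x : ι → R} {μ : R} (h : A *ᵥ x = μ • x) (j : ℕ) :
    (A ^ j) *ᵥ x = μ ^ j • x := by
  induction j with
  | zero => simp
  | succ j ih => rw [pow_succ, ← mulVec_mulVec, h, mulVec_smul, ih, smul_smul, pow_succ, mul_comm]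

lemma cube_sub_smul_mulVec_of_mulVec_eq_smul [DecidableEq ι] {R : Type*} [CommRing R]
    {A : Matrix ι ι R} {x : ι → R} {μ : R} (h : A *ᵥ x = μ • x) (c : R) :
    (A ^ 3 - c • A) *ᵥ x = (μ ^ 3 - c * μ) • x := by
  rw [sub_mulVec, smul_mulVec, pow_mulVec_of_mulVec_eq_smul h, h, smul_smul, ← sub_smul]

lemma trace_mul_vecMulVec {R : Type*} [CommSemiring R] (X : Matrix ι ι R) (u v : ι → R) :
    (X * vecMulVec u v).trace = v ⬝ᵥ X *ᵥ u := by
  rw [mul_vecMulVec, trace_vecMulVec, dotProduct_comm]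

lemma IsSymm.eq_of_trace_mul_eq {M P : Matrix ι ι ℝ} (hM : M.IsSymm) (hP : P.IsSymm)
    (hMP : (M * P).trace = (M * M).trace) (hPP : (P * P).trace = (M * M).trace) : M = P := by
  have hsymm : (M - P)ᴴ = M - P := by
    rw [conjTranspose_eq_transpose_of_trivial]
    exact (hM.sub hP).eq
  have htrace : ((M - P)ᴴ * (M - P)).trace = 0 := by
    rw [hsymm, sub_mul, mul_sub, mul_sub, trace_sub, trace_sub, trace_sub, trace_mul_comm P M,
      hMP, hPP]
    ring
  exact sub_eq_zero.mp (trace_conjTranspose_mul_self_eq_zero_iff.mp htrace)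

section RankTwo

variable {M : Matrix ι ι ℝ} {v w : ι → ℝ} {α β : ℝ}

lemma trace_mul_smul_vecMulVec_add_smul_vecMulVec (hv : v ≠ 0) (hw : w ≠ 0)
    (hMv : M *ᵥ v = α • v) (hMw : M *ᵥ w = β • w) :
    (M * ((α / (v ⬝ᵥ v)) • vecMulVec v v + (β / (w ⬝ᵥ w)) • vecMulVec w w)).trace
      = α ^ 2 + β ^ 2 := by
  have hvv : v ⬝ᵥ v ≠ 0 := dotProduct_self_eq_zero.not.mpr hv
  have hww : w ⬝ᵥ w ≠ 0 := dotProduct_self_eq_zero.not.mpr hw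
  rw [mul_add, Matrix.mul_smul, Matrix.mul_smul, trace_add, trace_smul, trace_smul,
    trace_mul_vecMulVec, trace_mul_vecMulVec, hMv, hMw, dotProduct_smul, dotProduct_smul,
    smul_eq_mul, smul_eq_mul, smul_eq_mul, smul_eq_mul]
  field_simp

lemma IsSymm.eq_smul_vecMulVec_add_smul_vecMulVec (hM : M.IsSymm) (hv : v ≠ 0) (hw : w ≠ 0)
    (hvw : v ⬝ᵥ w = 0) (hMv : M *ᵥ v = α • v) (hMw : M *ᵥ w = β • w)
    (htrace : (M * M).trace = α ^ 2 + β ^ 2) :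
    M = (α / (v ⬝ᵥ v)) • vecMulVec v v + (β / (w ⬝ᵥ w)) • vecMulVec w w := by
  set P := (α / (v ⬝ᵥ v)) • vecMulVec v v + (β / (w ⬝ᵥ w)) • vecMulVec w w
  have hvv : v ⬝ᵥ v ≠ 0 := dotProduct_self_eq_zero.not.mpr hv
  have hww : w ⬝ᵥ w ≠ 0 := dotProduct_self_eq_zero.not.mpr hw
  have hP : P.IsSymm := by
    refine IsSymm.add (IsSymm.smul ?_ _) (IsSymm.smul ?_ _) <;> exact transpose_vecMulVec _ _
  have hPv : P *ᵥ v = α • v := by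
    simp only [P, add_mulVec, smul_mulVec, vecMulVec_mulVec, dotProduct_comm w v, hvw]
    simp [smul_smul, div_mul_cancel₀ _ hvv]
  have hPw : P *ᵥ w = β • w := by
    simp only [P, add_mulVec, smul_mulVec, vecMulVec_mulVec, hvw]
    simp [smul_smul, div_mul_cancel₀ _ hww]
  refine hM.eq_of_trace_mul_eq hP ?_ ?_ <;> rw [htrace]
  · exact trace_mul_smul_vecMulVec_add_smul_vecMulVec hv hw hMv hMw
  · exact trace_mul_smul_vecMulVec_add_smul_vecMulVec hv hw hPv hPw

end RankTwo

section Bipartite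

variable {κ : Type*} [Fintype κ] {N : Matrix ι κ ℝ} {r : ℝ}

lemma fromBlocks_zero_mulVec_one (hrow : ∀ i, ∑ j, N i j = r) (hcol : ∀ j, ∑ i, N i j = r) :
    fromBlocks 0 N Nᵀ 0 *ᵥ 1 = r • 1 := by
  ext (i | j) <;> simp [mulVec, dotProduct, hrow, hcol]

lemma fromBlocks_zero_mulVec_sumElim_one_neg_one (hrow : ∀ i, ∑ j, N i j = r)
    (hcol : ∀ j, ∑ i, N i j = r) :
    fromBlocks 0 N Nᵀ 0 *ᵥ Sum.elim (1 : ι → ℝ) (-1 : κ → ℝ)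
      = (-r) • Sum.elim (1 : ι → ℝ) (-1 : κ → ℝ) := by
  ext (i | j) <;> simp [mulVec, dotProduct, hrow, hcol]

lemma fromBlocks_zero_pow_three {R : Type*} [Semiring R] [DecidableEq ι] [DecidableEq κ]
    (B : Matrix ι κ R) (C : Matrix κ ι R) :
    fromBlocks 0 B C 0 ^ 3 = fromBlocks 0 (B * C * B) (C * B * C) 0 := by
  simp [pow_succ, fromBlocks_multiply, Matrix.mul_assoc]

lemma IsSymm.apply_inl_inr_eq_of_trace_mul_self [Nonempty ι] {M : Matrix (ι ⊕ ι) (ι ⊕ ι) ℝ}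
    (hM : M.IsSymm) {α β : ℝ} (hMone : M *ᵥ 1 = α • 1)
    (hMsign : M *ᵥ Sum.elim (1 : ι → ℝ) (-1 : ι → ℝ) = β • Sum.elim (1 : ι → ℝ) (-1 : ι → ℝ))
    (htrace : (M * M).trace = α ^ 2 + β ^ 2) (i j : ι) :
    M (.inl i) (.inr j) = (α - β) / (2 * Fintype.card ι) := by
  set s := Sum.elim (1 : ι → ℝ) (-1 : ι → ℝ)
  obtain ⟨i₀⟩ := ‹Nonempty ι›
  have hone : (1 : ι ⊕ ι → ℝ) ≠ 0 := fun h => by simpa using congrFun h (.inl i₀)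
  have hs : s ≠ 0 := fun h => by simpa [s] using congrFun h (.inl i₀)
  have horth : (1 : ι ⊕ ι → ℝ) ⬝ᵥ s = 0 := by simp [s, dotProduct, Fintype.sum_sum_type]
  have hone_sq : (1 : ι ⊕ ι → ℝ) ⬝ᵥ 1 = 2 * Fintype.card ι := by simp [dotProduct, two_mul]
  have hs_sq : s ⬝ᵥ s = 2 * Fintype.card ι := by
    simp [s, dotProduct, Fintype.sum_sum_type, two_mul]
  rw [hM.eq_smul_vecMulVec_add_smul_vecMulVec hone hs horth hMone hMsign htrace, hone_sq, hs_sq]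
  simp only [Matrix.add_apply, Matrix.smul_apply, vecMulVec_apply, Pi.one_apply, s,
    Sum.elim_inl, Sum.elim_inr, Pi.neg_apply, smul_eq_mul]
  ring

end Bipartite

end Matrix

theorem five_eigenvalue_block_identity_general
    (m : ℕ) (hm : 0 < m) (N : Matrix (Fin m) (Fin m) ℝ)
    (k a b : ℕ) (θ : ℝ)
    (hrow : ∀ i, ∑ j, N i j = (k : ℝ))
    (hcol : ∀ j, ∑ i, N i j = (k : ℝ))
    (hA : (Matrix.fromBlocks (0 : Matrix (Fin m) (Fin m) ℝ) N Nᵀ 0).IsHermitian)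
    (hspec : Finset.univ.val.map hA.eigenvalues =
      (k : ℝ) ::ₘ (-(k : ℝ)) ::ₘ
        (Multiset.replicate a θ + Multiset.replicate a (-θ) +
          Multiset.replicate b (0 : ℝ))) :
    N * Nᵀ * N = θ ^ 2 • N +
      (2 * (k : ℝ) / (2 * m) * ((k : ℝ) ^ 2 - θ ^ 2)) • Matrix.of (fun _ _ => (1 : ℝ)) := by
  have : Nonempty (Fin m) := ⟨⟨0, hm⟩⟩
  have hAsymm := isHermitian_iff_isSymm.mp hA
  have hblock := ((hAsymm.pow 3).sub (hAsymm.smul _)).apply_inl_inr_eq_of_trace_mul_self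
    (cube_sub_smul_mulVec_of_mulVec_eq_smul (fromBlocks_zero_mulVec_one hrow hcol) _)
    (cube_sub_smul_mulVec_of_mulVec_eq_smul
      (fromBlocks_zero_mulVec_sumElim_one_neg_one hrow hcol) _)
    (hA.trace_mul_self_cube_sub_smul_eq hspec)
  ext i j
  have hij := hblock i j
  simp only [fromBlocks_zero_pow_three, Matrix.sub_apply, Matrix.smul_apply, fromBlocks_apply₁₂,
    Fintype.card_fin, smul_eq_mul] at hij
  simp only [Matrix.add_apply, Matrix.smul_apply, of_apply, smul_eq_mul]
  linear_combination hij

/-- for a connected bipartite `k`-regular graph on `n = 2m` vertices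
with adjacency matrix `A = [[0,N],[Nᵀ,0]]` and spectrum `{[±k]¹, [±θ]^a, [0]^b}`
(`a, b ≥ 1`), one has `NNᵀN = θ²N + (2k/n)(k² − θ²)·J`. -/
theorem five_eigenvalue_block_identity
    (m : ℕ) (hm : 0 < m) (N : Matrix (Fin m) (Fin m) ℝ)
    (k a b : ℕ) (θ : ℝ) (hθ : 0 < θ) (ha : 1 ≤ a) (hb : 1 ≤ b)
    (h01 : ∀ i j, N i j = 0 ∨ N i j = 1)
    (hrow : ∀ i, ∑ j, N i j = (k : ℝ))
    (hcol : ∀ j, ∑ i, N i j = (k : ℝ))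
    (hA : (Matrix.fromBlocks (0 : Matrix (Fin m) (Fin m) ℝ) N Nᵀ 0).IsHermitian)
    (hspec : Finset.univ.val.map hA.eigenvalues =
      (k : ℝ) ::ₘ (-(k : ℝ)) ::ₘ
        (Multiset.replicate a θ + Multiset.replicate a (-θ) +
          Multiset.replicate b (0 : ℝ))) :
    N * Nᵀ * N = θ ^ 2 • N +
      (2 * (k : ℝ) / (2 * m) * ((k : ℝ) ^ 2 - θ ^ 2)) • Matrix.of (fun _ _ => (1 : ℝ)) :=
  five_eigenvalue_block_identity_general m hm N k a b θ hrow hcol hA hspec
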